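/- arXiv:1711.01426 — 2 statements merged into one kernel-verified Lean document; each statement's English description precedes it below -/
import Mathlib

section
/- Assume condition (∗). If there exist a well-founded relation ⟨A, R⟩ and a function θ : {X_i : i ∈ I} → A monotone with respect to monomorphisms such that for each a in the range of θ there is no ω*-sequence in I^θ_a, then X = ⋃_{i∈I} X_i is reversible. In particular, X is reversible whenever all the sets I^θ_a, a in the range of θ, are finite. -/
universe u v w

section Defs

variable {α : Type*} {β : Type*}

/-- `f` is a homomorphism from `⟨α, r⟩` to `⟨β, s⟩`. -/
def IsHom (r : α → α → Prop) (s : β → β → Prop) (f : α → β) : Prop :=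
  ∀ x y, r x y → s (f x) (f y)

/-- A condensation is a bijective homomorphism. -/
def IsCond (r : α → α → Prop) (s : β → β → Prop) (f : α → β) : Prop :=
  Function.Bijective f ∧ IsHom r s f

/-- A monomorphism is an injective homomorphism. -/
def IsMono (r : α → α → Prop) (s : β → β → Prop) (f : α → β) : Prop :=
  Function.Injective f ∧ IsHom r s f

/-- An isomorphism of binary structures. -/
def IsIso (r : α → α → Prop) (s : β → β → Prop) (f : α → β) : Prop :=
  Function.Bijective f ∧ ∀ x y, r x y ↔ s (f x) (f y)

/-- A binary structure is reversible iff every self-condensation is an automorphism. -/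
def Reversible (r : α → α → Prop) : Prop :=
  ∀ f : α → α, IsCond r r f → IsIso r r f

/-- A binary structure is connected iff it has exactly one component: it is nonempty and
the least equivalence relation containing `r` relates any two points. -/
def Connected (r : α → α → Prop) : Prop :=
  Nonempty α ∧ ∀ x y, Relation.EqvGen r x y

/-- The relation of the disjoint union of the structures `⟨X i, R i⟩`. -/
def unionRel {I : Type*} {X : I → Type*} (R : ∀ i, X i → X i → Prop) :
    (Σ i, X i) → (Σ i, X i) → Prop :=
  fun a b => ∃ h : a.1 = b.1, R b.1 (h ▸ a.2) b.2

end Defs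

/-!
A condensation `f` of `⋃ Xᵢ` maps each connected component `Xᵢ` into a component `X_{g i}`, so
it is `Sigma.map g F` for a surjection `g : I → I` and monomorphisms `Fᵢ : Xᵢ → X_{g i}`.
Choosing preimages `i, g⁻¹ i, g⁻² i, …` gives a sequence along which each component embeds into
its predecessors; `θ` is monotone along it, hence eventually constant by well-foundedness, and
the absence of ω*-sequences in the fibres of `θ` forces a repetition. So every index is periodic
under `g`, which makes `g` a bijection and every `Fᵢ` a condensation. Going once around the cycle
of `i` gives a condensation `X_{g i} → Xᵢ`, and reversibility of `Xᵢ` makes `Fᵢ` an isomorphism.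
-/

open Function Set

section Hom

variable {α β γ : Type*} {r : α → α → Prop} {s : β → β → Prop} {t : γ → γ → Prop}
  {f : α → β} {g : β → γ}

theorem IsHom.comp (hg : IsHom s t g) (hf : IsHom r s f) : IsHom r t (g ∘ f) :=
  fun x y h => hg _ _ (hf x y h)

theorem IsMono.comp (hg : IsMono s t g) (hf : IsMono r s f) : IsMono r t (g ∘ f) :=
  ⟨hg.1.comp hf.1, hg.2.comp hf.2⟩

theorem IsCond.comp (hg : IsCond s t g) (hf : IsCond r s f) : IsCond r t (g ∘ f) :=
  ⟨hg.1.comp hf.1, hg.2.comp hf.2⟩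

theorem IsHom.eqvGen (hf : IsHom r s f) {x y : α} (h : Relation.EqvGen r x y) :
    Relation.EqvGen s (f x) (f y) := by
  induction h with
  | rel x y h => exact .rel _ _ (hf x y h)
  | refl x => exact .refl _
  | symm x y _ ih => exact .symm _ _ ih
  | trans x y z _ _ ih₁ ih₂ => exact .trans _ _ _ ih₁ ih₂

theorem Reversible.isIso_of_isCond {g : β → α} (hr : Reversible r) (hf : IsCond r s f)
    (hg : IsCond s r g) : IsIso r s f :=
  ⟨hf.1, fun x y => ⟨hf.2 x y, fun h => ((hr _ (hg.comp hf)).2 x y).2 (hg.2 _ _ h)⟩⟩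

end Hom

section Union

variable {I J : Type*} {X : I → Type*} {Y : J → Type*}
  {R : ∀ i, X i → X i → Prop} {S : ∀ j, Y j → Y j → Prop}

theorem isHom_sigma_mk (i : I) : IsHom (R i) (unionRel R) (Sigma.mk i) :=
  fun _ _ h => ⟨rfl, h⟩

theorem Relation.EqvGen.unionRel_fst {a b : Σ i, X i} (h : Relation.EqvGen (unionRel R) a b) :
    a.1 = b.1 :=
  Equivalence.eqvGen_iff eq_equivalence |>.1 <| IsHom.eqvGen (s := Eq) (fun _ _ h => h.1) h

theorem exists_eq_sigma_map (hconn : ∀ i, Connected (R i)) {f : (Σ i, X i) → Σ j, Y j}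
    (hf : IsHom (unionRel R) (unionRel S) f) :
    ∃ (g : I → J) (F : ∀ i, X i → Y (g i)), f = Sigma.map g F := by
  let x₀ : ∀ i, X i := fun i => Classical.choice (hconn i).1
  have hfst : ∀ i x, (f ⟨i, x⟩).1 = (f ⟨i, x₀ i⟩).1 := fun i x =>
    (hf.eqvGen ((isHom_sigma_mk i).eqvGen ((hconn i).2 x (x₀ i)))).unionRel_fst
  refine ⟨fun i => (f ⟨i, x₀ i⟩).1, fun i x => cast (congrArg Y (hfst i x)) (f ⟨i, x⟩).2, ?_⟩
  funext ⟨i, x⟩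
  exact Sigma.ext (hfst i x) (cast_heq _ _).symm

variable {g : I → J} {F : ∀ i, X i → Y (g i)}

theorem IsHom.of_sigma_map (hf : IsHom (unionRel R) (unionRel S) (Sigma.map g F)) (i : I) :
    IsHom (R i) (S (g i)) (F i) :=
  fun x y h => (hf ⟨i, x⟩ ⟨i, y⟩ ⟨rfl, h⟩).2

theorem Function.Surjective.of_sigma_map_fst (hf : Surjective (Sigma.map g F))
    (hY : ∀ j, Nonempty (Y j)) : Surjective g := fun j =>
  let ⟨a, ha⟩ := hf ⟨j, Classical.choice (hY j)⟩
  ⟨a.1, congrArg Sigma.fst ha⟩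

theorem Function.Surjective.of_sigma_map (hf : Surjective (Sigma.map g F)) (hg : Injective g)
    (i : I) : Surjective (F i) := fun y => by
  obtain ⟨⟨j, x⟩, hx⟩ := hf ⟨g i, y⟩
  obtain rfl : j = i := hg (congrArg Sigma.fst hx)
  exact ⟨x, sigma_mk_injective hx⟩

theorem unionRel_sigma_map_iff (hg : Injective g)
    (hF : ∀ i x y, R i x y ↔ S (g i) (F i x) (F i y)) (a b : Σ i, X i) :
    unionRel R a b ↔ unionRel S (Sigma.map g F a) (Sigma.map g F b) := by
  obtain ⟨i, x⟩ := a
  obtain ⟨j, y⟩ := b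
  constructor
  · rintro ⟨hij, h⟩
    change i = j at hij
    subst hij
    exact ⟨rfl, (hF i x y).1 h⟩
  · rintro ⟨h, h'⟩
    obtain rfl : i = j := hg h
    exact ⟨rfl, (hF i x y).2 h'⟩

end Union

section OmegaStar

variable {I A : Type*}

def IsOmegaStarSeq (le : I → I → Prop) (J : Set I) (s : ℕ → I) : Prop :=
  Injective s ∧ (∀ k, s k ∈ J) ∧ ∀ k l, k < l → le (s l) (s k)

theorem Set.Finite.not_isOmegaStarSeq {le : I → I → Prop} {J : Set I} (hJ : J.Finite)
    (s : ℕ → I) : ¬ IsOmegaStarSeq le J s := fun hs =>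
  infinite_range_of_injective hs.1 (hJ.subset (range_subset_iff.2 hs.2.1))

theorem WellFounded.exists_forall_add_eq {W : A → A → Prop} (hW : WellFounded W) {u : ℕ → A}
    (hu : ∀ k, u (k + 1) = u k ∨ W (u (k + 1)) (u k)) : ∃ m, ∀ k, u (m + k) = u m := by
  obtain ⟨_, ⟨m, rfl⟩, hmin⟩ := hW.has_min (range u) ⟨_, 0, rfl⟩
  refine ⟨m, fun k => ?_⟩
  induction k with
  | zero => rfl
  | succ k ih =>
    rcases hu (m + k) with h | h
    · exact h.trans ih
    · exact absurd (ih ▸ h) (hmin _ ⟨_, rfl⟩)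

theorem not_isOmegaStarSeq_univ {le : I → I → Prop} {W : A → A → Prop} (hW : WellFounded W)
    {θ : I → A} (hθ : ∀ i j, le i j → θ i = θ j ∨ W (θ i) (θ j))
    (hfib : ∀ a ∈ range θ, ∀ s, ¬ IsOmegaStarSeq le {i | θ i = a} s) (s : ℕ → I) :
    ¬ IsOmegaStarSeq le univ s := by
  rintro ⟨hinj, -, hle⟩
  obtain ⟨m, hm⟩ := hW.exists_forall_add_eq (u := θ ∘ s) fun k => hθ _ _ (hle k _ k.lt_succ_self)
  exact hfib _ ⟨_, rfl⟩ (fun k => s (m + k))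
    ⟨hinj.comp (add_right_injective m), hm, fun k l hkl => hle _ _ (by omega)⟩

theorem mem_periodicPts_of_surjective {le : I → I → Prop} [IsTrans I le]
    (hno : ∀ s, ¬ IsOmegaStarSeq le univ s) {g : I → I} (hg : Surjective g)
    (hle : ∀ i, le i (g i)) (i : I) : i ∈ periodicPts g := by
  obtain ⟨g', hg'⟩ := hg.hasRightInverse
  have hdesc : ∀ k l, k < l → le (g'^[l] i) (g'^[k] i) :=
    Nat.rel_of_forall_rel_succ_of_lt (swap le) fun k => by
      simpa only [swap, iterate_succ_apply', hg' _] using hle (g' (g'^[k] i))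
  obtain ⟨k, l, hkl, heq⟩ : ∃ k l, k < l ∧ g'^[k] i = g'^[l] i := by
    by_contra! h
    exact hno _ ⟨.of_lt_imp_ne h, fun _ => trivial, hdesc⟩
  obtain ⟨n, rfl⟩ := Nat.exists_eq_add_of_lt hkl
  have hper : IsPeriodicPt g (n + 1) (g'^[k] i) := by
    calc g^[n + 1] (g'^[k] i) = g^[n + 1] (g'^[n + 1] (g'^[k] i)) := by
          rw [← iterate_add_apply, heq, Nat.add_comm (n + 1), Nat.add_assoc]
      _ = g'^[k] i := hg'.iterate _ _
  rw [← hg'.iterate k i]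
  exact mk_mem_periodicPts n.succ_pos (hper.apply_iterate k)

theorem apply_rel_self_of_mem_periodicPts {r : I → I → Prop} [Std.Refl r] [IsTrans I r]
    {f : I → I} (hf : ∀ i, r i (f i)) {i : I} (hi : i ∈ periodicPts f) : r (f i) i := by
  obtain ⟨n, hn, hper⟩ := mem_periodicPts.1 hi
  obtain ⟨m, rfl⟩ := Nat.exists_eq_add_of_lt hn
  have hcycle : f^[m] (f i) = i := by
    simpa only [Nat.zero_add, iterate_succ_apply] using hper.eq
  have hpath := Nat.rel_of_forall_rel_succ_of_le r (f := fun k => f^[k] (f i))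
    (fun k => by simpa only [iterate_succ_apply'] using hf _) m.zero_le
  rwa [hcycle] at hpath

end OmegaStar

section Components

variable {I : Type*} {X : I → Type*} (R : ∀ i, X i → X i → Prop)

def EmbedsInto (i j : I) : Prop := ∃ F : X i → X j, IsMono (R i) (R j) F

def CondensesInto (i j : I) : Prop := ∃ F : X i → X j, IsCond (R i) (R j) F

instance : IsTrans I (EmbedsInto R) :=
  ⟨fun _ _ _ ⟨F, hF⟩ ⟨G, hG⟩ => ⟨G ∘ F, hG.comp hF⟩⟩

instance : Std.Refl (CondensesInto R) :=
  ⟨fun _ => ⟨id, bijective_id, fun _ _ h => h⟩⟩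

instance : IsTrans I (CondensesInto R) :=
  ⟨fun _ _ _ ⟨F, hF⟩ ⟨G, hG⟩ => ⟨G ∘ F, hG.comp hF⟩⟩

variable {R}

theorem reversible_unionRel_of_forall_mem_periodicPts (hconn : ∀ i, Connected (R i))
    (hrev : ∀ i, Reversible (R i))
    (hper : ∀ g : I → I, Surjective g → (∀ i, EmbedsInto R i (g i)) → ∀ i, i ∈ periodicPts g) :
    Reversible (unionRel R) := by
  intro f hf
  obtain ⟨g, F, rfl⟩ := exists_eq_sigma_map hconn hf.2
  have hFmono : ∀ i, IsMono (R i) (R (g i)) (F i) := fun i =>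
    ⟨hf.1.1.of_sigma_map i, hf.2.of_sigma_map i⟩
  have hgper := hper g (hf.1.2.of_sigma_map_fst fun i => (hconn i).1) fun i => ⟨F i, hFmono i⟩
  have hg : Injective g := injOn_univ.1 <| by
    simpa only [eq_univ_of_forall hgper] using (bijOn_periodicPts (f := g)).injOn
  have hFcond : ∀ i, IsCond (R i) (R (g i)) (F i) := fun i =>
    ⟨⟨(hFmono i).1, hf.1.2.of_sigma_map hg i⟩, (hFmono i).2⟩
  have hFiso : ∀ i, IsIso (R i) (R (g i)) (F i) := fun i =>
    have ⟨G, hG⟩ := apply_rel_self_of_mem_periodicPts (r := CondensesInto R)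
      (fun i => ⟨F i, hFcond i⟩) (hgper i)
    (hrev i).isIso_of_isCond (hFcond i) hG
  exact ⟨hf.1, unionRel_sigma_map_iff hg fun i => (hFiso i).2⟩

theorem reversible_unionRel_of_wellFounded (hconn : ∀ i, Connected (R i))
    (hrev : ∀ i, Reversible (R i)) {A : Type*} {W : A → A → Prop} (hW : WellFounded W)
    {θ : I → A} (hθ : ∀ i j, EmbedsInto R i j → θ i = θ j ∨ W (θ i) (θ j))
    (hfib : ∀ a ∈ range θ, ∀ s, ¬ IsOmegaStarSeq (EmbedsInto R) {i | θ i = a} s) :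
    Reversible (unionRel R) :=
  reversible_unionRel_of_forall_mem_periodicPts hconn hrev fun _ hg hle =>
    mem_periodicPts_of_surjective (not_isOmegaStarSeq_univ hW hθ hfib) hg hle

end Components

/-- **Theorem (Statement 8).** Under condition (∗) — `⟨X i, R i⟩`, `i ∈ I`, pairwise disjoint
(realized by a sigma type), connected and reversible binary structures — if there are a
well-founded relation `⟨A, W⟩` (every non-empty subset of `A` has a `W`-minimal element) and a
function `θ` on the components, monotone with respect to monomorphisms w.r.t. the
reflexivization of `W`, such that for each `a` in the range of `θ` there is no ω*-sequence in
`I^θ_a = {i : θ i = a}`, then the union is reversible; in particular, it is reversible whenever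
all the sets `I^θ_a` are finite. -/
theorem stmt8 {I : Type u} {X : I → Type v} (R : ∀ i, X i → X i → Prop)
    (hconn : ∀ i, Connected (R i)) (hrev : ∀ i, Reversible (R i)) :
    ((∃ (A : Type w) (W : A → A → Prop) (θ : I → A),
        (∀ S : Set A, S.Nonempty → ∃ a ∈ S, ∀ b ∈ S, ¬ W b a) ∧
        (∀ i j : I, (∃ F : X i → X j, IsMono (R i) (R j) F) → θ i = θ j ∨ W (θ i) (θ j)) ∧
        (∀ a ∈ Set.range θ, ¬ ∃ g : ℕ → I,
          Function.Injective g ∧ (∀ k, θ (g k) = a) ∧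
          ∀ k l : ℕ, k < l → ∃ F : X (g l) → X (g k), IsMono (R (g l)) (R (g k)) F)) →
      Reversible (unionRel R)) ∧
    ((∃ (A : Type w) (W : A → A → Prop) (θ : I → A),
        (∀ S : Set A, S.Nonempty → ∃ a ∈ S, ∀ b ∈ S, ¬ W b a) ∧
        (∀ i j : I, (∃ F : X i → X j, IsMono (R i) (R j) F) → θ i = θ j ∨ W (θ i) (θ j)) ∧
        (∀ a ∈ Set.range θ, {i : I | θ i = a}.Finite)) →
      Reversible (unionRel R)) := by
  constructor
  · rintro ⟨A, W, θ, hW, hθ, hfib⟩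
    exact reversible_unionRel_of_wellFounded hconn hrev (WellFounded.wellFounded_iff_has_min.2 hW)
      hθ fun a ha s hs => hfib a ha ⟨s, hs⟩
  · rintro ⟨A, W, θ, hW, hθ, hfin⟩
    exact reversible_unionRel_of_wellFounded hconn hrev (WellFounded.wellFounded_iff_has_min.2 hW)
      hθ fun a ha => (hfin a ha).not_isOmegaStarSeq
end

section
/- For a partial order X let θ_0(X) := sup{α ∈ Ord : the well order α embeds into X} and θ_1(X) := sup{α ∈ Ord : the reverse well order α* embeds into X}. Assume condition (∗), where each X_i is a partial order ⟨X_i, <_i⟩. If the sequence of pairs of ordinals ⟨⟨θ_0(X_i), θ_1(X_i)⟩ : i ∈ I⟩ is finite-to-one (there is no infinite J ⊆ I on which all these pairs are equal), then ⋃_{i∈I} X_i is a reversible poset. -/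
/-
A condensation `f` of the disjoint union maps each connected component into a single
component, so it induces a surjection `g` of the index set, and it restricts to injective
strictly monotone maps `X i → X (g i)`; hence `θ₀` and `θ₁` can only grow along `g`. Following
a backward orbit of `g`, the pair `(θ₀, θ₁)` is nonincreasing, hence eventually constant, and
finite-to-one-ness forces the orbit to repeat: every index is periodic under `g`, so `g` is a
permutation. For a period `k` of `i`, `f^[k]` restricts to a self-condensation of `X i`, which is
an automorphism by reversibility; as `f^[k] = f^[k-1] ∘ f` with `f^[k-1]` a homomorphism, `f`
itself must reflect the order.
-/

universe u v w

/-- `θ₀(X)`: the supremum of the ordinals `α` such that the well order `α` embeds into the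
poset `X`. -/
noncomputable def theta0 (X : Type u) [PartialOrder X] : Ordinal.{u} :=
  sSup {α : Ordinal.{u} |
    ∃ f : α.ToType → X, Function.Injective f ∧ ∀ x y, x < y ↔ f x < f y}

/-- `θ₁(X)`: the supremum of the ordinals `α` such that the reverse well order `α*` embeds
into the poset `X`. -/
noncomputable def theta1 (X : Type u) [PartialOrder X] : Ordinal.{u} :=
  sSup {α : Ordinal.{u} |
    ∃ f : α.ToType → X, Function.Injective f ∧ ∀ x y, x < y ↔ f y < f x}

open Function Set

section BinaryStructures

variable {α : Type*} {r : α → α → Prop} {f : α → α}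

lemma IsHom.iterate (hf : IsHom r r f) : ∀ n, IsHom r r f^[n]
  | 0 => fun _ _ h => h
  | n + 1 => fun x y h => hf.iterate n _ _ (hf x y h)

lemma IsCond.iterate (hf : IsCond r r f) (n : ℕ) : IsCond r r f^[n] :=
  ⟨hf.1.iterate n, hf.2.iterate n⟩

lemma IsHom.rel_of_rel_apply_of_iterate (hf : IsHom r r f) {k : ℕ} (hk : 0 < k) {a b : α}
    (hreflect : r (f^[k] a) (f^[k] b) → r a b) (hab : r (f a) (f b)) : r a b := by
  obtain ⟨n, rfl⟩ := Nat.exists_eq_succ_of_ne_zero hk.ne'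
  exact hreflect (hf.iterate n _ _ hab)

end BinaryStructures

section DisjointUnion

variable {I : Type*} {X : I → Type*} {R : ∀ i, X i → X i → Prop}

lemma unionRel_mk_mk {i : I} {u v : X i} : unionRel R ⟨i, u⟩ ⟨i, v⟩ ↔ R i u v :=
  ⟨fun ⟨_, h⟩ => h, fun h => ⟨rfl, h⟩⟩

def componentMap (f : (Σ i, X i) → Σ i, X i) {i j : I} (h : ∀ x : X i, (f ⟨i, x⟩).1 = j)
    (x : X i) : X j :=
  h x ▸ (f ⟨i, x⟩).2

lemma mk_componentMap (f : (Σ i, X i) → Σ i, X i) {i j : I}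
    (h : ∀ x : X i, (f ⟨i, x⟩).1 = j) (x : X i) :
    (⟨j, componentMap f h x⟩ : Σ i, X i) = f ⟨i, x⟩ :=
  Sigma.ext (h x).symm (by simp [componentMap])

variable {f : (Σ i, X i) → Σ i, X i}

lemma IsHom.componentMap (hf : IsHom (unionRel R) (unionRel R) f) {i j : I}
    (h : ∀ x : X i, (f ⟨i, x⟩).1 = j) : IsHom (R i) (R j) (componentMap f h) := by
  intro x y hxy
  have := hf _ _ (unionRel_mk_mk.mpr hxy)
  rw [← mk_componentMap f h x, ← mk_componentMap f h y] at this
  exact unionRel_mk_mk.mp this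

lemma Function.Injective.componentMap (hf : Injective f) {i j : I}
    (h : ∀ x : X i, (f ⟨i, x⟩).1 = j) : Injective (componentMap f h) := fun x y hxy =>
  sigma_mk_injective (hf (by rw [← mk_componentMap f h x, ← mk_componentMap f h y, hxy]))

lemma IsHom.exists_semiconj_fst (hconn : ∀ i, Connected (R i))
    (hf : IsHom (unionRel R) (unionRel R) f) : ∃ g : I → I, Semiconj Sigma.fst f g := by
  refine ⟨fun i => (f ⟨i, (hconn i).1.some⟩).1, fun ⟨i, x⟩ => ?_⟩
  have hresp : R i ≤ ((· = ·) on fun y => (f ⟨i, y⟩).1) := fun x y hxy =>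
    (hf _ _ (unionRel_mk_mk.mpr hxy)).1
  exact (eq_equivalence.comap fun y : X i => (f ⟨i, y⟩).1).eqvGen_iff.mp
    (Relation.EqvGen.mono hresp _ _ ((hconn i).2 x _))

lemma IsCond.componentMap (hf : IsCond (unionRel R) (unionRel R) f) {g : I → I}
    (hg : Semiconj Sigma.fst f g) (hginj : Injective g) {i : I} (hi : g i = i) :
    IsCond (R i) (R i) (componentMap f fun x => (hg ⟨i, x⟩).trans hi) := by
  refine ⟨⟨hf.1.1.componentMap _, fun z => ?_⟩, hf.2.componentMap _⟩
  obtain ⟨⟨j, x⟩, hx⟩ := hf.1.2 ⟨i, z⟩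
  obtain rfl : j = i := hginj (((hg _).symm.trans (congrArg Sigma.fst hx)).trans hi.symm)
  exact ⟨x, sigma_mk_injective ((mk_componentMap f _ x).trans hx)⟩

theorem isIso_of_isCond_of_periodicPts_eq_univ (hrev : ∀ i, Reversible (R i))
    (hf : IsCond (unionRel R) (unionRel R) f) {g : I → I} (hg : Semiconj Sigma.fst f g)
    (hper : periodicPts g = univ) : IsIso (unionRel R) (unionRel R) f := by
  have hginj : Injective g := injOn_univ.mp (hper ▸ (bijOn_periodicPts g).injOn)
  refine ⟨hf.1, fun a b => ⟨hf.2 a b, fun hab => ?_⟩⟩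
  obtain ⟨i, x⟩ := a
  obtain ⟨j, y⟩ := b
  obtain rfl : i = j := hginj ((hg _).symm.trans (hab.1.trans (hg _)))
  obtain ⟨k, hk, hki⟩ := mem_periodicPts.mp (hper.symm ▸ mem_univ i)
  have hfk : ∀ z : X i, (f^[k] ⟨i, z⟩).1 = i := fun z => (hg.iterate_right k ⟨i, z⟩).trans hki
  have hFk := (hf.iterate k).componentMap (hg.iterate_right k) (hginj.iterate k) hki
  refine hf.2.rel_of_rel_apply_of_iterate hk (fun h => ?_) hab
  rw [← mk_componentMap f^[k] hfk x, ← mk_componentMap f^[k] hfk y] at h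
  exact unionRel_mk_mk.mpr (((hrev i _ hFk).2 x y).mpr (unionRel_mk_mk.mp h))

end DisjointUnion

section Theta

variable {X Y : Type u} [PartialOrder X] [PartialOrder Y]

theorem theta1_eq_theta0_orderDual : theta1 X = theta0 Xᵒᵈ := rfl

theorem theta0_le_of_strictMono {F : X → Y} (hF : StrictMono F) : theta0 X ≤ theta0 Y := by
  refine csSup_le_csSup' ⟨(Order.succ (Cardinal.mk Y)).ord, ?_⟩ ?_
  · rintro α ⟨e, he, -⟩
    refine (Cardinal.lt_ord.mpr (Order.lt_succ_iff.mpr ?_)).le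
    simpa using Cardinal.mk_le_of_injective he
  · rintro α ⟨e, -, he⟩
    have hFe : StrictMono (F ∘ e) := fun x y hxy => hF ((he x y).mp hxy)
    exact ⟨F ∘ e, hFe.injective, fun x y => hFe.lt_iff_lt.symm⟩

theorem theta1_le_of_strictMono {F : X → Y} (hF : StrictMono F) : theta1 X ≤ theta1 Y := by
  simpa only [theta1_eq_theta0_orderDual] using theta0_le_of_strictMono hF.dual

end Theta

theorem Function.Surjective.periodicPts_eq_univ {I α : Type*} [PartialOrder α] [WellFoundedLT α]
    {g : I → I} (hg : Surjective g) {φ : I → α} (hφ : ∀ i, φ i ≤ φ (g i))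
    (hfin : ∀ a, (φ ⁻¹' {a}).Finite) : periodicPts g = univ := by
  refine eq_univ_of_forall fun i => ?_
  set σ := surjInv hg
  have hgσ : ∀ y, g (σ y) = y := rightInverse_surjInv hg
  have hσ : ∀ n y, g^[n] (σ^[n] y) = y := fun n => (rightInverse_surjInv hg).iterate n
  have hanti : Antitone fun n => φ (σ^[n] i) := antitone_nat_of_succ_le fun n => by
    simpa only [iterate_succ_apply', hgσ] using hφ (σ (σ^[n] i))
  obtain ⟨N, hN⟩ :=
    wellFoundedGT_iff_monotone_chain_condition.mp (inferInstance : WellFoundedGT αᵒᵈ)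
      ⟨_, hanti.dual_right⟩
  obtain ⟨m, n, hmn, hmn_eq⟩ := (hfin (φ (σ^[N] i))).exists_lt_map_eq_of_forall_mem
    (f := fun n => σ^[N + n] i) fun n => (hN (N + n) (Nat.le_add_right N n)).symm
  have hcycle : σ^[n - m] (σ^[N + n] i) = σ^[N + n] i := by
    calc σ^[n - m] (σ^[N + n] i) = σ^[n - m] (σ^[N + m] i) := by rw [hmn_eq]
      _ = σ^[n - m + (N + m)] i := (iterate_add_apply σ _ _ i).symm
      _ = σ^[N + n] i := by rw [show n - m + (N + m) = N + n by omega]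
  have hper : IsPeriodicPt g (n - m) (σ^[N + n] i) := by
    have := hσ (n - m) (σ^[N + n] i)
    rwa [hcycle] at this
  exact mk_mem_periodicPts (Nat.sub_pos_of_lt hmn) (hσ (N + n) i ▸ hper.apply_iterate (N + n))

/-- **Proposition (Statement 15).** Assume condition (∗), where the components
`⟨X i, <⟩`, `i ∈ I`, are pairwise disjoint (realized by a sigma type), connected and
reversible partial orders. If the sequence of pairs of ordinals `⟨⟨θ₀(X i), θ₁(X i)⟩ : i ∈ I⟩`
is finite-to-one (there is no infinite `J ⊆ I` on which all these pairs are equal), then the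
disjoint union `⋃_{i∈I} X i` is a reversible poset. -/
theorem stmt15 {I : Type u} {X : I → Type v} [∀ i, PartialOrder (X i)]
    (hconn : ∀ i, Connected (fun x y : X i => x < y))
    (hrev : ∀ i, Reversible (fun x y : X i => x < y))
    (hfto : ¬ ∃ J : Set I, J.Infinite ∧ ∀ i ∈ J, ∀ j ∈ J,
      theta0 (X i) = theta0 (X j) ∧ theta1 (X i) = theta1 (X j)) :
    Reversible (unionRel (fun i => ((· < ·) : X i → X i → Prop))) := by
  intro f hf
  obtain ⟨g, hg⟩ := hf.2.exists_semiconj_fst hconn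
  have hgsurj : Surjective g := fun j => by
    obtain ⟨a, ha⟩ := hf.1.2 ⟨j, (hconn j).1.some⟩
    exact ⟨a.1, (hg a).symm.trans (congrArg Sigma.fst ha)⟩
  let φ : I → Ordinal.{v} × Ordinal.{v} := fun i => (theta0 (X i), theta1 (X i))
  have hφ : ∀ i, φ i ≤ φ (g i) := fun i =>
    have hF : StrictMono (componentMap f fun x : X i => hg ⟨i, x⟩) := hf.2.componentMap _
    ⟨theta0_le_of_strictMono hF, theta1_le_of_strictMono hF⟩
  have hfin : ∀ p, (φ ⁻¹' {p}).Finite := fun p => not_infinite.mp fun hinf =>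
    hfto ⟨_, hinf, fun i hi j hj => Prod.ext_iff.mp (hi.trans hj.symm)⟩
  exact isIso_of_isCond_of_periodicPts_eq_univ hrev hf hg (hgsurj.periodicPts_eq_univ hφ hfin)
end
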